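/- arXiv:hep-th/0403283 — 3 statements merged into one kernel-verified Lean document; each statement's English description precedes it below -/
import Mathlib

section
/- Let R be a unital ring (e.g. a ring of square complex matrices), let m ∈ R, and for each k ≥ 0 set P_k = (1+m)^k + (1−m)^k and Q_k = (1+m)^k − (1−m)^k. Assume that P_k is a unit of R for every k ≥ 1 (in particular 2 = P_1 is a unit). Define the star-power sequence by m⁽¹⁾ = m and the MSFT recursion m⁽ⁿ⁺¹⁾ = (m + m⁽ⁿ⁾m)(1 + m⁽ⁿ⁾m)⁻¹ + (m⁽ⁿ⁾ − m m⁽ⁿ⁾)(1 + m m⁽ⁿ⁾)⁻¹. Then for every n ≥ 1: m⁽ⁿ⁾ commutes with m, the element 1 + m m⁽ⁿ⁾ is a unit, and m⁽ⁿ⁾ has the closed form m⁽ⁿ⁾ = Q_n · P_n⁻¹ = ((1+m)^n − (1−m)^n)((1+m)^n + (1−m)^n)⁻¹. -/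
/-!
With `m⁽ⁿ⁾` commuting with `m`, the MSFT recursion collapses to the addition formula for
hyperbolic tangents, `m⁽ⁿ⁺¹⁾ = (m + m⁽ⁿ⁾)(1 + m m⁽ⁿ⁾)⁻¹`, so `m⁽ⁿ⁾` plays the role of
`tanh (n x)` for `m = tanh x`. Writing `m⁽ⁿ⁾ = Qₙ Pₙ⁻¹`, the addition formula is the linear
recurrence `Pₙ₊₁ = Pₙ + m Qₙ`, `Qₙ₊₁ = m Pₙ + Qₙ`, which `(1 ± m)ⁿ` satisfy.
-/

open scoped Ring

theorem Commute.ringInverse_right {M₀ : Type*} [MonoidWithZero M₀] {a b : M₀}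
    (h : Commute a b) : Commute a b⁻¹ʳ := by
  by_cases hb : IsUnit b
  · obtain ⟨u, rfl⟩ := hb
    rw [Ring.inverse_unit]
    exact h.units_inv_right
  · rw [Ring.inverse_non_unit b hb]
    exact Commute.zero_right a

section StarPower

variable {R : Type*} [Ring R]

theorem one_add_pow_succ_add_one_sub_pow_succ (m : R) (n : ℕ) :
    (1 + m) ^ (n + 1) + (1 - m) ^ (n + 1)
      = ((1 + m) ^ n + (1 - m) ^ n) + m * ((1 + m) ^ n - (1 - m) ^ n) := by
  rw [pow_succ', pow_succ']
  noncomm_ring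

theorem one_add_pow_succ_sub_one_sub_pow_succ (m : R) (n : ℕ) :
    (1 + m) ^ (n + 1) - (1 - m) ^ (n + 1)
      = m * ((1 + m) ^ n + (1 - m) ^ n) + ((1 + m) ^ n - (1 - m) ^ n) := by
  rw [pow_succ', pow_succ']
  noncomm_ring

/-- One step `m⁽ⁿ⁾ ↦ m⁽ⁿ⁺¹⁾` of the MSFT star-power recursion. -/
noncomputable def starStep (m x : R) : R :=
  (m + x * m) * (1 + x * m)⁻¹ʳ + (x - m * x) * (1 + m * x)⁻¹ʳ

theorem Commute.starStep_eq {m x : R} (h : Commute m x) :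
    starStep m x = (m + x) * (1 + m * x)⁻¹ʳ := by
  rw [starStep, ← h.eq, ← add_mul]
  congr 1
  abel

theorem one_add_mul_mul_inverse (m q : R) {p : R} (hp : IsUnit p) :
    1 + m * (q * p⁻¹ʳ) = (p + m * q) * p⁻¹ʳ := by
  rw [add_mul, Ring.mul_inverse_cancel p hp, mul_assoc]

/-- The addition formula for `tanh`, with `tanh y = q / p` written as a fraction. -/
theorem add_mul_inverse_mul_inverse_one_add (m q : R) {p : R} (hp : IsUnit p)
    (hp' : IsUnit (p + m * q)) :
    (m + q * p⁻¹ʳ) * (1 + m * (q * p⁻¹ʳ))⁻¹ʳ = (m * p + q) * (p + m * q)⁻¹ʳ := by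
  have hnum : m + q * p⁻¹ʳ = (m * p + q) * p⁻¹ʳ := by
    rw [add_mul, Ring.mul_inverse_cancel_right p m hp]
  rw [hnum, one_add_mul_mul_inverse m q hp, Ring.inverse_mul (Or.inl hp'),
    Ring.inverse_inverse hp, mul_assoc, Ring.inverse_mul_cancel_left p _ hp]

end StarPower

/-- In a unital ring, the MSFT wedge-state recursion
`m⁽ⁿ⁺¹⁾ = (m + m⁽ⁿ⁾m)(1 + m⁽ⁿ⁾m)⁻¹ + (m⁽ⁿ⁾ − m m⁽ⁿ⁾)(1 + m m⁽ⁿ⁾)⁻¹` with `m⁽¹⁾ = m`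
has, for every `n ≥ 1`, a solution commuting with `m`, with `1 + m m⁽ⁿ⁾` a unit,
given in closed form by `m⁽ⁿ⁾ = ((1+m)ⁿ − (1−m)ⁿ)((1+m)ⁿ + (1−m)ⁿ)⁻¹`. -/
theorem msft_star_power_closed_form
    {R : Type*} [Ring R] (m : R) (P Q : ℕ → R)
    (hP : ∀ k, P k = (1 + m) ^ k + (1 - m) ^ k)
    (hQ : ∀ k, Q k = (1 + m) ^ k - (1 - m) ^ k)
    (hPunit : ∀ k, 1 ≤ k → IsUnit (P k))
    (a : ℕ → R) (ha1 : a 1 = m)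
    (harec : ∀ n, 1 ≤ n →
      a (n + 1) = (m + a n * m) * Ring.inverse (1 + a n * m)
        + (a n - m * a n) * Ring.inverse (1 + m * a n)) :
    ∀ n, 1 ≤ n →
      Commute m (a n) ∧ IsUnit (1 + m * a n) ∧ a n = Q n * Ring.inverse (P n) := by
  have hP_succ n : P (n + 1) = P n + m * Q n := by
    rw [hP, hP, hQ, one_add_pow_succ_add_one_sub_pow_succ]
  have hQ_succ n : Q (n + 1) = m * P n + Q n := by
    rw [hQ, hP, hQ, one_add_pow_succ_sub_one_sub_pow_succ]
  have hcomm k : Commute m (Q k * (P k)⁻¹ʳ) := by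
    have hadd := ((Commute.one_right m).add_right (Commute.refl m)).pow_right k
    have hsub := ((Commute.one_right m).sub_right (Commute.refl m)).pow_right k
    rw [hP, hQ]
    exact (hadd.sub_right hsub).mul_right (hadd.add_right hsub).ringInverse_right
  have hform : ∀ n, 1 ≤ n → a n = Q n * (P n)⁻¹ʳ := by
    intro n hn
    induction n, hn using Nat.le_induction with
    | base =>
      rw [ha1, Ring.eq_mul_inverse_iff_mul_eq _ _ _ (hPunit 1 le_rfl), hP, hQ]
      noncomm_ring
    | succ n hn ih =>
      rw [harec n hn, ← starStep, ih, (hcomm n).starStep_eq,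
        add_mul_inverse_mul_inverse_one_add m _ (hPunit n hn) (hP_succ n ▸ hPunit _ n.succ_pos),
        hP_succ, hQ_succ]
  intro n hn
  refine ⟨hform n hn ▸ hcomm n, ?_, hform n hn⟩
  rw [hform n hn, one_add_mul_mul_inverse m _ (hPunit n hn), ← hP_succ]
  exact (hPunit (n + 1) n.succ_pos).mul (hPunit n hn).ringInverse
end

section
/- Let R be a commutative unital ring, let m ∈ R, and for k ≥ 0 set P_k = (1+m)^k + (1−m)^k and Q_k = (1+m)^k − (1−m)^k; assume P_k is a unit for every k ≥ 1 and define a_k = Q_k · P_k⁻¹. Then for all n, k ≥ 1 the element 1 + a_n a_k is a unit of R and the Moyal composition rule (a_n + a_k)(1 + a_n a_k)⁻¹ = a_{n+k} holds; i.e. the wedge states satisfy W_n * W_k = W_{n+k} at the level of their defining matrices. -/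
/-!
The elements `a_k = Q_k / P_k` behave like `tanh (k t)`, and the Moyal product is the addition
law of `tanh`: `P_n P_k + Q_n Q_k = 2 P_{n+k}` and
`Q_n P_k + P_n Q_k = 2 Q_{n+k}`. Clearing the denominator `P_n P_k` from `1 + a_n a_k` and
`a_n + a_k` therefore leaves the fraction `2 Q_{n+k} / 2 P_{n+k}`, and `2 = P_1` is a unit.
-/

section MoyalFractions

variable {R : Type*} [CommRing R]

theorem isUnit_and_mul_inverse_eq_of_mul_eq_mul {x y d c r s : R} (hc : IsUnit c)
    (hr : IsUnit r) (hx : x * d = c * r) (hy : y * d = c * s) :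
    IsUnit x ∧ y * Ring.inverse x = s * Ring.inverse r := by
  have hxu : IsUnit x := isUnit_of_mul_isUnit_left (hx ▸ hc.mul hr)
  refine ⟨hxu, ?_⟩
  rw [Ring.eq_mul_inverse_iff_mul_eq _ _ _ hr]
  apply hc.mul_left_cancel
  linear_combination (-y * Ring.inverse x) * hx + hy + y * d * Ring.inverse_mul_cancel x hxu

theorem moyal_mul_fractions {p p' q q' c r s : R} (hp : IsUnit p) (hp' : IsUnit p')
    (hc : IsUnit c) (hr : IsUnit r) (hden : p * p' + q * q' = c * r)
    (hnum : q * p' + p * q' = c * s) :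
    IsUnit (1 + q * Ring.inverse p * (q' * Ring.inverse p')) ∧
      (q * Ring.inverse p + q' * Ring.inverse p') *
          Ring.inverse (1 + q * Ring.inverse p * (q' * Ring.inverse p')) =
        s * Ring.inverse r := by
  have hpp := Ring.inverse_mul_cancel p hp
  have hpp' := Ring.inverse_mul_cancel p' hp'
  refine isUnit_and_mul_inverse_eq_of_mul_eq_mul (d := p * p') hc hr ?_ ?_
  · linear_combination (q * q' * Ring.inverse p' * p') * hpp + q * q' * hpp' + hden
  · linear_combination q * p' * hpp + q' * p * hpp' + hnum

end MoyalFractions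

/-- The wedge-state matrices `a_k = ((1+m)^k − (1−m)^k)((1+m)^k + (1−m)^k)⁻¹` satisfy
the Moyal composition rule `(a_n + a_k)(1 + a_n a_k)⁻¹ = a_{n+k}`, i.e.
`W_n * W_k = W_{n+k}` at the level of the Gaussian matrices. -/
theorem msft_wedge_composition
    {R : Type*} [CommRing R] (m : R) (P Q a : ℕ → R)
    (hP : ∀ k, P k = (1 + m) ^ k + (1 - m) ^ k)
    (hQ : ∀ k, Q k = (1 + m) ^ k - (1 - m) ^ k)
    (hPunit : ∀ k, 1 ≤ k → IsUnit (P k))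
    (ha : ∀ k, a k = Q k * Ring.inverse (P k)) :
    ∀ n k, 1 ≤ n → 1 ≤ k →
      IsUnit (1 + a n * a k) ∧
        (a n + a k) * Ring.inverse (1 + a n * a k) = a (n + k) := by
  intro n k hn hk
  have h2 : IsUnit (2 : R) := by
    convert hPunit 1 le_rfl using 1
    rw [hP]
    ring
  simp only [ha]
  exact moyal_mul_fractions (hPunit n hn) (hPunit k hk) h2 (hPunit (n + k) (by omega))
    (by simp only [hP, hQ, pow_add]; ring) (by simp only [hP, hQ, pow_add]; ring)
end

section
/- Let R be a commutative unital ring, m ∈ R a unit, and for k ≥ 0 set P_k = (1+m)^k + (1−m)^k and Q_k = (1+m)^k − (1−m)^k; assume P_k is a unit for every k ≥ 1, and set a_k = Q_k · P_k⁻¹. Let M be an R-module, λ ∈ M, and define the sequence λ⁽¹⁾ = λ and λ⁽ⁿ⁺¹⁾ = (1 + m a_n)⁻¹ • ( (λ + λ⁽ⁿ⁾) + a_n • λ − m • λ⁽ⁿ⁾ ). Then for every n ≥ 1, λ⁽ⁿ⁾ = (m⁻¹ a_n) • λ. -/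
/-!
With `P_k, Q_k` as in the statement, `(P_{k+1}, Q_{k+1}) = (P_k + m Q_k, m P_k + Q_k)`, so the
ratio `a_k = Q_k / P_k` obeys the addition law `a_{k+1} = (m + a_k) / (1 + m a_k)` of the star
powers (formally `a_k = tanh (k artanh m)`). Given that law, `(m⁻¹ a_n) • λ` satisfies the
recursion of `λ⁽ⁿ⁾`: the bracket collapses to `(1 + m⁻¹ a_n) • λ`, and
`(1 + m a_n)⁻¹ (1 + m⁻¹ a_n) = m⁻¹ a_{n+1}` is the addition law divided by `m`.
-/

section

open scoped Ring

variable {R : Type*} [CommRing R]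

theorem one_add_mul_mul_inverse_s8 (m : R) {P Q : R} (hP : IsUnit P) :
    1 + m * (Q * P⁻¹ʳ) = (P + m * Q) * P⁻¹ʳ := by
  linear_combination -Ring.mul_inverse_cancel P hP

theorem star_power_ratio_succ (m : R) {P Q : R} (hP : IsUnit P) (hP' : IsUnit (P + m * Q)) :
    (1 + m * (Q * P⁻¹ʳ)) * ((m * P + Q) * (P + m * Q)⁻¹ʳ) = m + Q * P⁻¹ʳ := by
  rw [one_add_mul_mul_inverse_s8 m hP]
  linear_combination ((m * P + Q) * P⁻¹ʳ) * Ring.mul_inverse_cancel _ hP' +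
    m * Ring.mul_inverse_cancel P hP

variable {M : Type*} [AddCommGroup M] [Module R M]

theorem shift_vector_step {m a a' : R} (hm : IsUnit m) (hu : IsUnit (1 + m * a))
    (hrec : (1 + m * a) * a' = m + a) (lam : M) :
    (1 + m * a)⁻¹ʳ • ((lam + (m⁻¹ʳ * a) • lam) + a • lam - m • (m⁻¹ʳ * a) • lam) =
      (m⁻¹ʳ * a') • lam := by
  have hbracket : (lam + (m⁻¹ʳ * a) • lam) + a • lam - m • (m⁻¹ʳ * a) • lam =
      (1 + m⁻¹ʳ * a) • lam := by
    rw [smul_smul, Ring.mul_inverse_cancel_left m a hm, add_smul, one_smul]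
    abel
  have hcoeff : (1 + m * a)⁻¹ʳ * (1 + m⁻¹ʳ * a) = m⁻¹ʳ * a' := by
    rw [Ring.inverse_mul_eq_iff_eq_mul _ _ _ hu]
    linear_combination -m⁻¹ʳ * hrec - Ring.inverse_mul_cancel m hm
  rw [hbracket, smul_smul, hcoeff]

theorem shift_vector_eq_of_star_power_rec {m : R} (hm : IsUnit m) {a : ℕ → R} (ha1 : a 1 = m)
    (hu : ∀ n, 1 ≤ n → IsUnit (1 + m * a n))
    (hrec : ∀ n, 1 ≤ n → (1 + m * a n) * a (n + 1) = m + a n)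
    (lam : M) (l : ℕ → M) (hl1 : l 1 = lam)
    (hlrec : ∀ n, 1 ≤ n →
      l (n + 1) = (1 + m * a n)⁻¹ʳ • ((lam + l n) + a n • lam - m • l n)) :
    ∀ n, 1 ≤ n → l n = (m⁻¹ʳ * a n) • lam := by
  intro n hn
  induction n, hn using Nat.le_induction with
  | base => rw [hl1, ha1, Ring.inverse_mul_cancel m hm, one_smul]
  | succ n hn ih => rw [hlrec n hn, ih, shift_vector_step hm (hu n hn) (hrec n hn)]

end

/-- The shift-vector recursion of the MSFT star powers,
`λ⁽ⁿ⁺¹⁾ = (1 + m a_n)⁻¹ • ((λ + λ⁽ⁿ⁾) + a_n • λ − m • λ⁽ⁿ⁾)` with `λ⁽¹⁾ = λ`,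
has the closed-form solution `λ⁽ⁿ⁾ = (m⁻¹ a_n) • λ` for all `n ≥ 1`. -/
theorem msft_shift_vector_closed_form
    {R : Type*} [CommRing R] (m : R) (hm : IsUnit m) (P Q a : ℕ → R)
    (hP : ∀ k, P k = (1 + m) ^ k + (1 - m) ^ k)
    (hQ : ∀ k, Q k = (1 + m) ^ k - (1 - m) ^ k)
    (hPunit : ∀ k, 1 ≤ k → IsUnit (P k))
    (ha : ∀ k, a k = Q k * Ring.inverse (P k))
    {M : Type*} [AddCommGroup M] [Module R M] (lam : M)
    (l : ℕ → M) (hl1 : l 1 = lam)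
    (hlrec : ∀ n, 1 ≤ n →
      l (n + 1) = Ring.inverse (1 + m * a n) • ((lam + l n) + a n • lam - m • l n)) :
    ∀ n, 1 ≤ n → l n = (Ring.inverse m * a n) • lam := by
  have hPsucc (k : ℕ) : P (k + 1) = P k + m * Q k := by rw [hP, hP, hQ]; ring
  have hQsucc (k : ℕ) : Q (k + 1) = m * P k + Q k := by rw [hQ, hQ, hP]; ring
  have ha1 : a 1 = m := by
    have hQ1 : Q 1 = m * P 1 := by rw [hQ, hP]; ring
    rw [ha, hQ1, Ring.mul_inverse_cancel_right _ _ (hPunit 1 le_rfl)]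
  have hu (n : ℕ) (hn : 1 ≤ n) : IsUnit (1 + m * a n) := by
    rw [ha, one_add_mul_mul_inverse_s8 m (hPunit n hn), ← hPsucc]
    exact (hPunit (n + 1) (by omega)).mul (hPunit n hn).ringInverse
  have hrec (n : ℕ) (hn : 1 ≤ n) : (1 + m * a n) * a (n + 1) = m + a n := by
    have hP' := hPunit (n + 1) (by omega)
    rw [hPsucc] at hP'
    rw [ha, ha, hPsucc, hQsucc, star_power_ratio_succ m (hPunit n hn) hP']
  exact shift_vector_eq_of_star_power_rec hm ha1 hu hrec lam l hl1 hlrec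
end
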